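/- (Zhang's theorem, instance optimality of WOMP.) For every weakness parameter κ ∈ (0,1] there exist an integer A ≥ 1 and constants C > 0 and δ* ∈ (0,1) such that the following holds for all n ≥ 1: if D is a normalized dictionary in a Hilbert space H satisfying RIP((A+1)n) with constant δ_{(A+1)n} ≤ δ*, then for any f ∈ H, the WOMP algorithm with parameter κ returns after An steps an approximation f_{An} satisfying ‖f − f_{An}‖ ≤ C σ_n(f), where σ_n(f) = inf_{g ∈ Σ_n} ‖f − g‖. In particular one may take δ* = 1/6, A = 26⌈6κ^{-2}⌉, and C = 8. -/

import Mathlib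

open scoped RealInnerProductSpace BigOperators

/-- The synthesis operator of a dictionary: `Φ c = ∑ γ c_γ φ_γ`. -/
noncomputable def dictSum {Γ H : Type*} [NormedAddCommGroup H] [InnerProductSpace ℝ H]
    (φ : Γ → H) (c : Γ →₀ ℝ) : H :=
  c.sum fun γ a => a • φ γ

/-- The squared ℓ² norm of a finitely supported sequence. -/
noncomputable def l2normSq {Γ : Type*} (c : Γ →₀ ℝ) : ℝ :=
  ∑ γ ∈ c.support, (c γ) ^ 2

/-- The restricted isometry property of order `m` with constant `δ`. -/
def RIP {Γ H : Type*} [NormedAddCommGroup H] [InnerProductSpace ℝ H]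
    (φ : Γ → H) (m : ℕ) (δ : ℝ) : Prop :=
  ∀ c : Γ →₀ ℝ, c.support.card ≤ m →
    (1 - δ) * l2normSq c ≤ ‖dictSum φ c‖ ^ 2 ∧
    ‖dictSum φ c‖ ^ 2 ≤ (1 + δ) * l2normSq c

/-- The set `Σ_n` of `n`-term linear combinations from the dictionary. -/
def SigmaN {Γ H : Type*} [NormedAddCommGroup H] [InnerProductSpace ℝ H]
    (φ : Γ → H) (n : ℕ) : Set H :=
  {g | ∃ c : Γ →₀ ℝ, c.support.card ≤ n ∧ dictSum φ c = g}

/-- The error of best `n`-term approximation. -/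
noncomputable def bestErr {Γ H : Type*} [NormedAddCommGroup H] [InnerProductSpace ℝ H]
    (φ : Γ → H) (n : ℕ) (f : H) : ℝ :=
  sInf ((fun g => ‖f - g‖) '' SigmaN φ n)

/-!
Fix an `n`-term combination `g = ∑ c_γ φ_γ` and suppose the residual `r_k = f - f_k` stays above
`8 ‖f - g‖` up to step `An`. Then RIP makes `‖r_k‖²` comparable to the mass `∑ c_γ²` of the atoms
of `g` not selected yet. Order these atoms by decreasing `|c_γ|`; for every atom `p` whose tail
mass `∑_{γ > p} c_γ²` is at most `‖r_k‖² / 9`, most of the correlation of `r_k` with `g` sits on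
atoms at least as large as `c_p`, so the weak greedy step removes at least `θ c_p²` from `‖r_k‖²`,
`θ = (64/625) κ²`. A potential built on the running maximum of such pivots then bounds the number of
steps by `(9 + θ) n / θ < An`, a contradiction.
-/

open Finset

namespace TailMass

variable {α : Type*} [LinearOrder α]

lemma sum_filter_le_eq_add (a : α → ℝ) {s : Finset α} {p : α} (hp : p ∈ s) :
    ∑ γ ∈ s with p ≤ γ, a γ = a p + ∑ γ ∈ s with p < γ, a γ := by
  have : {γ ∈ s | p ≤ γ} = insert p {γ ∈ s | p < γ} := by
    ext γ
    simp only [mem_filter, mem_insert, le_iff_eq_or_lt]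
    constructor
    · rintro ⟨hγ, rfl | h⟩ <;> simp_all
    · rintro (rfl | ⟨hγ, h⟩) <;> simp_all
  rw [this, sum_insert (by simp)]

lemma card_filter_lt_add_one_le {s : Finset α} {q r : α} (hr : r ∈ s) (hqr : q < r) :
    #{γ ∈ s | r < γ} + 1 ≤ #{γ ∈ s | q < γ} :=
  card_lt_card <| (ssubset_iff_of_subset (monotone_filter_right s fun _ _ => hqr.trans)).2
    ⟨r, mem_filter.2 ⟨hr, hqr⟩, by simp⟩

theorem exists_pivot (a : α → ℝ) (s : Finset α) {K x : ℝ} (hx : 0 < x)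
    (hxs : x ≤ K * ∑ γ ∈ s, a γ) :
    ∃ p ∈ s, K * ∑ γ ∈ s with p < γ, a γ ≤ x ∧ x ≤ K * (a p + ∑ γ ∈ s with p < γ, a γ) := by
  have hs : s.Nonempty := by
    by_contra h
    rw [not_nonempty_iff_eq_empty.1 h, sum_empty, mul_zero] at hxs
    linarith
  set C := {q ∈ s | K * ∑ γ ∈ s with q < γ, a γ ≤ x}
  have hC : C.Nonempty := ⟨s.max' hs, mem_filter.2 ⟨s.max'_mem hs, by
    rw [filter_false_of_mem fun γ hγ => not_lt.2 (s.le_max' γ hγ), sum_empty, mul_zero]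
    exact hx.le⟩⟩
  obtain ⟨hpC, hp⟩ := mem_filter.1 (C.min'_mem hC)
  set p := C.min' hC
  refine ⟨p, hpC, hp, ?_⟩
  rw [← sum_filter_le_eq_add a hpC]
  by_contra! hlt
  by_cases hlow : {γ ∈ s | γ < p}.Nonempty
  · -- the predecessor `q` of `p` in `s` would be a smaller element of `C`
    obtain ⟨hqs, hqp⟩ := mem_filter.1 ({γ ∈ s | γ < p}.max'_mem hlow)
    set q := {γ ∈ s | γ < p}.max' hlow
    have hgap : {γ ∈ s | q < γ} = {γ ∈ s | p ≤ γ} := filter_congr fun γ hγ =>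
      ⟨fun h => not_lt.1 fun h' => h.not_ge ({γ ∈ s | γ < p}.le_max' γ (mem_filter.2 ⟨hγ, h'⟩)),
        hqp.trans_le⟩
    have hqC : q ∈ C := mem_filter.2 ⟨hqs, by rw [hgap]; exact hlt.le⟩
    exact hqp.not_ge (C.min'_le q hqC)
  · have hall : {γ ∈ s | p ≤ γ} = s := filter_true_of_mem fun γ hγ =>
      not_lt.1 fun h => hlow ⟨γ, mem_filter.2 ⟨hγ, h⟩⟩
    rw [hall] at hlt
    exact hlt.not_ge hxs

noncomputable def potential (a : α → ℝ) (K : ℝ) (s : Finset α) (q : α) (x : ℝ) : ℝ :=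
  x / a q + K * ∑ γ ∈ s with q < γ, (1 - a γ / a q)

variable {a : α → ℝ} {K : ℝ} {s s' : Finset α} {q q' : α} {x x' : ℝ}

lemma one_sub_div_nonneg (hq : 0 < a q) (hs : ∀ γ ∈ s, q < γ → a γ ≤ a q) {γ : α}
    (hγ : γ ∈ {γ ∈ s | q < γ}) : 0 ≤ 1 - a γ / a q := by
  rw [sub_nonneg, div_le_one hq]
  exact hs γ (mem_filter.1 hγ).1 (mem_filter.1 hγ).2

lemma potential_le (hq : 0 < a q) (hx : x ≤ K * (a q + ∑ γ ∈ s with q < γ, a γ)) :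
    potential a K s q x ≤ K * (1 + #{γ ∈ s | q < γ}) := by
  have hx' : x / a q ≤ K + K * ∑ γ ∈ s with q < γ, a γ / a q := by
    rw [← sum_div, div_le_iff₀ hq, add_mul, mul_assoc, div_mul_cancel₀ _ hq.ne', ← mul_add]
    exact hx
  simp only [potential, sum_sub_distrib, sum_const, nsmul_eq_mul, mul_one]
  linarith

lemma card_le_potential (hK : 0 ≤ K) (hq : 0 < a q) (hs : ∀ γ ∈ s, q < γ → a γ ≤ a q)
    {E : Finset α} (hE : E ⊆ {γ ∈ s | q < γ}) (hx : K * ∑ γ ∈ E, a γ ≤ x) :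
    K * #E ≤ potential a K s q x := by
  have hmass : K * ∑ γ ∈ E, a γ / a q ≤ x / a q := by
    rw [← sum_div, ← mul_div_assoc]
    exact div_le_div_of_nonneg_right hx hq.le
  have hrest : ∑ γ ∈ E, (1 - a γ / a q) ≤ ∑ γ ∈ s with q < γ, (1 - a γ / a q) :=
    sum_le_sum_of_subset_of_nonneg hE fun γ hγ _ => one_sub_div_nonneg hq hs hγ
  have hcard : (#E : ℝ) = ∑ γ ∈ E, a γ / a q + ∑ γ ∈ E, (1 - a γ / a q) := by
    rw [← sum_add_distrib]
    simp
  rw [potential, hcard, mul_add]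
  linarith [mul_le_mul_of_nonneg_left hrest hK]

lemma potential_nonneg (hK : 0 ≤ K) (hq : 0 < a q) (hs : ∀ γ ∈ s, q < γ → a γ ≤ a q)
    (hx : 0 ≤ x) : 0 ≤ potential a K s q x := by
  simpa using card_le_potential hK hq hs (empty_subset _) (by simpa using hx)

lemma potential_add_le (hK : 0 ≤ K) (hq : 0 < a q) (hs : ∀ γ ∈ s, q < γ → a γ ≤ a q)
    (hs' : s' ⊆ s) {θ : ℝ} (hx : x' + θ * a q ≤ x) :
    potential a K s' q x' + θ ≤ potential a K s q x := by
  have hsum : ∑ γ ∈ s' with q < γ, (1 - a γ / a q) ≤ ∑ γ ∈ s with q < γ, (1 - a γ / a q) :=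
    sum_le_sum_of_subset_of_nonneg (filter_subset_filter _ hs') fun γ hγ _ =>
      one_sub_div_nonneg hq hs hγ
  have hx' : x' / a q + θ ≤ x / a q := by
    rw [← mul_div_cancel_right₀ θ hq.ne', ← add_div]
    exact div_le_div_of_nonneg_right hx hq.le
  unfold potential
  linarith [mul_le_mul_of_nonneg_left hsum hK]

lemma potential_le_potential_of_lt (hK : 0 ≤ K) (hq : 0 < a q) (hq' : 0 < a q')
    (hs : ∀ γ ∈ s, q < γ → a γ ≤ a q) (hs' : s' ⊆ s) (hqq' : q < q') (hq's' : q' ∈ s')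
    (hx' : x' ≤ K * (a q' + ∑ γ ∈ s' with q' < γ, a γ)) (hx : K * ∑ γ ∈ s' with q < γ, a γ ≤ x) :
    potential a K s' q' x' ≤ potential a K s q x :=
  calc potential a K s' q' x' ≤ K * (1 + #{γ ∈ s' | q' < γ}) := potential_le hq' hx'
    _ ≤ K * #{γ ∈ s' | q < γ} := by
      gcongr
      rw [add_comm]
      exact_mod_cast card_filter_lt_add_one_le hq's' hqq'
    _ ≤ potential a K s q x :=
      card_le_potential hK hq hs (filter_subset_filter _ hs') hx

/-- One step of the counting argument, with `q` the running maximum of the pivots so far and `p'`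
the next pivot: either the maximum stays and the potential drops by `θ`, or it advances past an
element of `U₀`. -/
lemma potential_add_card_step {U₀ : Finset α} {p p' : α} {θ : ℝ} (hK : 0 ≤ K) (hθ : 0 ≤ θ)
    (ha_pos : ∀ γ ∈ U₀, 0 < a γ) (ha : AntitoneOn a U₀) (hsU : s ⊆ U₀) (hs' : s' ⊆ s)
    (hq : q ∈ U₀) (hp : p ∈ s) (hpq : p ≤ q) (hp_tail : K * ∑ γ ∈ s with p < γ, a γ ≤ x)
    (hdrop : x' ≤ x - θ * a p)
    (hp' : p' ∈ s') (hp'_sandwich : x' ≤ K * (a p' + ∑ γ ∈ s' with p' < γ, a γ)) :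
    potential a K s' (max q p') x' + θ * #{γ ∈ U₀ | max q p' < γ} + θ ≤
      potential a K s q x + θ * #{γ ∈ U₀ | q < γ} := by
  have hqpos := ha_pos q hq
  have hs_le : ∀ γ ∈ s, q < γ → a γ ≤ a q := fun γ hγ h => ha hq (hsU hγ) h.le
  rcases le_or_gt p' q with hstay | hadv
  · have hx : x' + θ * a q ≤ x := by
      have := mul_le_mul_of_nonneg_left (ha (hsU hp) hq hpq) hθ
      linarith
    rw [max_eq_left hstay]
    linarith [potential_add_le hK hqpos hs_le hs' hx]
  · have hx : K * ∑ γ ∈ s' with q < γ, a γ ≤ x := by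
      refine le_trans (mul_le_mul_of_nonneg_left ?_ hK) hp_tail
      refine sum_le_sum_of_subset_of_nonneg (fun γ hγ => ?_) fun γ hγ _ => ?_
      · exact mem_filter.2 ⟨hs' (mem_filter.1 hγ).1, hpq.trans_lt (mem_filter.1 hγ).2⟩
      · exact (ha_pos γ (hsU (mem_filter.1 hγ).1)).le
    have hpot := potential_le_potential_of_lt hK hqpos (ha_pos p' (hsU (hs' hp'))) hs_le hs'
      hadv hp' hp'_sandwich hx
    have hcard : (#{γ ∈ U₀ | p' < γ} : ℝ) + 1 ≤ #{γ ∈ U₀ | q < γ} := by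
      exact_mod_cast card_filter_lt_add_one_le (hsU (hs' hp')) hadv
    rw [max_eq_right hadv.le]
    nlinarith

theorem mul_succ_le_card_of_pivot {U : ℕ → Finset α} {x : ℕ → ℝ} {p : ℕ → α} {θ : ℝ} {N : ℕ}
    (hK : 0 ≤ K) (hθ : 0 ≤ θ) (hU : Antitone U)
    (ha_pos : ∀ γ ∈ U 0, 0 < a γ) (ha : AntitoneOn a (U 0))
    (hp : ∀ k ≤ N, p k ∈ U k)
    (hp_tail : ∀ k ≤ N, K * ∑ γ ∈ U k with p k < γ, a γ ≤ x k)
    (hp_sandwich : ∀ k ≤ N, x k ≤ K * (a (p k) + ∑ γ ∈ U k with p k < γ, a γ))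
    (hdrop : ∀ k < N, x (k + 1) ≤ x k - θ * a (p k)) :
    θ * (N + 1) ≤ (K + θ) * #(U 0) := by
  have hU0 : ∀ k, U k ⊆ U 0 := fun k => hU (Nat.zero_le k)
  set q := partialSups p
  have hq : ∀ k ≤ N, q k ∈ U 0 := fun k hk => by
    obtain ⟨j, hj, hqj⟩ := exists_partialSups_eq p k
    rw [hqj]
    exact hU0 j (hp j (hj.trans hk))
  set Ψ : ℕ → ℝ := fun k => potential a K (U k) (q k) (x k) + θ * #{γ ∈ U 0 | q k < γ}
  have hstep : ∀ k < N, Ψ (k + 1) + θ ≤ Ψ k := fun k hk => by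
    have hq_succ : q (k + 1) = max (q k) (p (k + 1)) := partialSups_succ p k
    simp only [Ψ, hq_succ]
    exact potential_add_card_step hK hθ ha_pos ha (hU0 k)
      (hU k.le_succ) (hq k hk.le) (hp k hk.le) (le_partialSups p k) (hp_tail k hk.le)
      (hdrop k hk) (hp (k + 1) hk) (hp_sandwich (k + 1) hk)
  have hinit : Ψ 0 + θ ≤ (K + θ) * #(U 0) := by
    have hp0 := hp 0 (Nat.zero_le N)
    have hpot := potential_le (ha_pos _ hp0) (hp_sandwich 0 (Nat.zero_le N))
    have hcard : (#{γ ∈ U 0 | p 0 < γ} : ℝ) + 1 ≤ #(U 0) := by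
      exact_mod_cast card_lt_card (filter_ssubset.2 ⟨p 0, hp0, lt_irrefl _⟩)
    simp only [Ψ, q, partialSups_zero]
    nlinarith
  have hfin : 0 ≤ Ψ N := by
    have hx : 0 ≤ x N := le_trans (mul_nonneg hK (sum_nonneg fun γ hγ =>
      (ha_pos γ (hU0 N (mem_filter.1 hγ).1)).le)) (hp_tail N le_rfl)
    refine add_nonneg (potential_nonneg hK (ha_pos _ (hq N le_rfl)) (fun γ hγ h => ?_) hx)
      (by positivity)
    exact ha (hq N le_rfl) (hU0 N hγ) h.le
  have hdecay : ∀ k ≤ N, Ψ k + θ * k ≤ Ψ 0 := by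
    intro k
    induction k with
    | zero => simp
    | succ k ih =>
      intro hk
      have := hstep k hk
      have := ih (Nat.le_of_succ_le hk)
      push_cast
      linarith
  linarith [hdecay N le_rfl]

theorem mul_succ_le_card_of_drop {U : ℕ → Finset α} {x : ℕ → ℝ} {θ : ℝ} {N : ℕ}
    (hK : 0 ≤ K) (hθ : 0 ≤ θ) (hU : Antitone U)
    (ha_pos : ∀ γ ∈ U 0, 0 < a γ) (ha : AntitoneOn a (U 0))
    (hx_pos : ∀ k ≤ N, 0 < x k) (hx : ∀ k ≤ N, x k ≤ K * ∑ γ ∈ U k, a γ)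
    (hdrop : ∀ k < N, ∀ p ∈ U k,
      K * ∑ γ ∈ U k with p < γ, a γ ≤ x k → x (k + 1) ≤ x k - θ * a p) :
    θ * (N + 1) ≤ (K + θ) * #(U 0) := by
  obtain ⟨p₀, -⟩ := exists_pivot a (U 0) (hx_pos 0 N.zero_le) (hx 0 N.zero_le)
  have : Nonempty α := ⟨p₀⟩
  choose! p hp hp_tail hp_sandwich using fun k (hk : k ≤ N) =>
    exists_pivot a (U k) (hx_pos k hk) (hx k hk)
  exact mul_succ_le_card_of_pivot hK hθ hU ha_pos ha hp hp_tail hp_sandwich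
    fun k hk => hdrop k hk (p k) (hp k hk.le) (hp_tail k hk.le)

end TailMass

section Dictionary

variable {Γ H : Type*} [NormedAddCommGroup H] [InnerProductSpace ℝ H]

lemma dictSum_eq_linearCombination (φ : Γ → H) (c : Γ →₀ ℝ) :
    dictSum φ c = Finsupp.linearCombination ℝ φ c :=
  (Finsupp.linearCombination_apply ℝ c).symm

lemma l2normSq_nonneg (c : Γ →₀ ℝ) : 0 ≤ l2normSq c :=
  sum_nonneg fun _ _ => sq_nonneg _

lemma RIP.norm_sum_sq_le {φ : Γ → H} {m : ℕ} {δ : ℝ} (h : RIP φ m δ) {s : Finset Γ}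
    (hs : #s ≤ m) (b : Γ → ℝ) :
    ‖∑ γ ∈ s, b γ • φ γ‖ ^ 2 ≤ (1 + δ) * ∑ γ ∈ s, b γ ^ 2 := by
  set c := Finsupp.indicator s fun γ _ => b γ
  have hc : c.support ⊆ s := Finsupp.support_indicator_subset _ _
  have hcb : ∀ γ ∈ s, c γ = b γ := fun γ hγ => Finsupp.indicator_of_mem hγ _
  have hsum : dictSum φ c = ∑ γ ∈ s, b γ • φ γ := by
    rw [dictSum, Finsupp.sum_of_support_subset c hc (fun γ a => a • φ γ) fun _ _ => zero_smul ℝ _]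
    exact sum_congr rfl fun γ hγ => by rw [hcb γ hγ]
  have hl2 : l2normSq c = ∑ γ ∈ s, b γ ^ 2 := by
    rw [l2normSq, sum_subset hc fun γ _ hγ => by rw [Finsupp.notMem_support_iff.1 hγ]; ring]
    exact sum_congr rfl fun γ hγ => by rw [hcb γ hγ]
  rw [← hsum, ← hl2]
  exact (h c ((card_le_card hc).trans hs)).2

lemma dictSum_sub_sum_sdiff_mem_span (φ : Γ → H) (c : Γ →₀ ℝ) [DecidableEq Γ] (S : Finset Γ) :
    dictSum φ c - ∑ γ ∈ c.support \ S, c γ • φ γ ∈ Submodule.span ℝ (φ '' S) := by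
  rw [dictSum, Finsupp.sum, ← sum_inter_add_sum_sdiff c.support S, add_sub_cancel_right]
  exact Submodule.sum_mem _ fun γ hγ =>
    Submodule.smul_mem _ _ (Submodule.subset_span ⟨γ, (mem_inter.1 hγ).2, rfl⟩)

lemma le_mul_bestErr {φ : Γ → H} {n : ℕ} {f : H} {e C : ℝ} (hC : 0 < C)
    (h : ∀ c : Γ →₀ ℝ, #c.support ≤ n → e ≤ C * ‖f - dictSum φ c‖) : e ≤ C * bestErr φ n f := by
  have hne : ((fun g => ‖f - g‖) '' SigmaN φ n).Nonempty :=
    ⟨_, 0, ⟨0, by simp, by simp [dictSum]⟩, rfl⟩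
  rw [← div_le_iff₀' hC, bestErr]
  refine le_csInf hne ?_
  rintro _ ⟨_, ⟨c, hc, rfl⟩, rfl⟩
  rw [div_le_iff₀' hC]
  exact h c hc

end Dictionary

section WOMP

variable {Γ H : Type*} [NormedAddCommGroup H] [InnerProductSpace ℝ H] [DecidableEq Γ]

/-- `fk k` is the orthogonal projection of `f` onto the span of the atoms `γseq 0, …, γseq (k-1)`,
and `γseq k` is a `κ`-weak greedy choice against the residual `f - fk k`. -/
structure IsWOMP (φ : Γ → H) (κ : ℝ) (f : H) (γseq : ℕ → Γ) (fk : ℕ → H) : Prop where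
  mem_span : ∀ k, fk k ∈ Submodule.span ℝ (φ '' ((range k).image γseq : Set Γ))
  inner_eq_zero : ∀ k, ∀ v ∈ Submodule.span ℝ (φ '' ((range k).image γseq : Set Γ)),
    ⟪f - fk k, v⟫ = 0
  weak_greedy : ∀ k γ, κ * |⟪f - fk k, φ γ⟫| ≤ |⟪f - fk k, φ (γseq k)⟫|

namespace IsWOMP

variable {φ : Γ → H} {κ : ℝ} {f : H} {γseq : ℕ → Γ} {fk : ℕ → H}

lemma norm_sub_le_of_mem_span (hW : IsWOMP φ κ f γseq fk) {k : ℕ} {v : H}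
    (hv : v ∈ Submodule.span ℝ (φ '' ((range k).image γseq : Set Γ))) :
    ‖f - fk k‖ ≤ ‖f - v‖ := by
  have hpyth := norm_add_sq_eq_norm_sq_add_norm_sq_real
    (hW.inner_eq_zero k _ (Submodule.sub_mem _ (hW.mem_span k) hv))
  rw [sub_add_sub_cancel] at hpyth
  nlinarith [norm_nonneg (f - fk k), norm_nonneg (f - v), sq_nonneg ‖fk k - v‖]

lemma norm_sq_succ_le (hW : IsWOMP φ κ f γseq fk) (hnorm : ∀ γ, ‖φ γ‖ = 1) (k : ℕ) :
    ‖f - fk (k + 1)‖ ^ 2 ≤ ‖f - fk k‖ ^ 2 - ⟪f - fk k, φ (γseq k)⟫ ^ 2 := by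
  set t := ⟪f - fk k, φ (γseq k)⟫
  have hspan : Submodule.span ℝ (φ '' ((range k).image γseq : Set Γ)) ≤
      Submodule.span ℝ (φ '' ((range (k + 1)).image γseq : Set Γ)) :=
    Submodule.span_mono <| Set.image_mono <| coe_subset.2 <|
      image_subset_image (range_subset_range.2 k.le_succ)
  have hv : fk k + t • φ (γseq k) ∈
      Submodule.span ℝ (φ '' ((range (k + 1)).image γseq : Set Γ)) :=
    Submodule.add_mem _ (hspan (hW.mem_span k)) <| Submodule.smul_mem _ _ <|
      Submodule.subset_span ⟨γseq k, mem_image_of_mem γseq (self_mem_range_succ k), rfl⟩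
  have hle := hW.norm_sub_le_of_mem_span hv
  have hstep : ‖f - (fk k + t • φ (γseq k))‖ ^ 2 = ‖f - fk k‖ ^ 2 - t ^ 2 := by
    rw [← sub_sub, norm_sub_sq_real, real_inner_smul_right, norm_smul, hnorm, Real.norm_eq_abs,
      mul_one, sq_abs]
    ring
  nlinarith [norm_nonneg (f - fk (k + 1))]

lemma norm_antitone (hW : IsWOMP φ κ f γseq fk) (hnorm : ∀ γ, ‖φ γ‖ = 1) :
    Antitone fun k => ‖f - fk k‖ :=
  antitone_nat_of_succ_le fun k => by
    have := hW.norm_sq_succ_le hnorm k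
    exact (pow_le_pow_iff_left₀ (norm_nonneg _) (norm_nonneg _) two_ne_zero).1
      (by nlinarith [sq_nonneg ⟪f - fk k, φ (γseq k)⟫])

variable {m : ℕ} {δ : ℝ} {c : Γ →₀ ℝ} {k : ℕ}

lemma sum_sq_sdiff_le (hW : IsWOMP φ κ f γseq fk) (hRIP : RIP φ m δ) (hδ : δ ≤ 1 / 6)
    (hm : #c.support + k ≤ m) (hfar : 8 * ‖f - dictSum φ c‖ < ‖f - fk k‖) :
    ∑ γ ∈ c.support \ (range k).image γseq, c γ ^ 2 ≤ 243 / 160 * ‖f - fk k‖ ^ 2 := by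
  obtain ⟨b, hb, hbf⟩ := (Finsupp.mem_span_image_iff_linearCombination ℝ).1 (hW.mem_span k)
  have hb : ↑b.support ⊆ ((range k).image γseq : Set Γ) := (Finsupp.mem_supported ℝ b).1 hb
  set w := c - b
  have hw : dictSum φ w = (f - fk k) - (f - dictSum φ c) := by
    rw [dictSum_eq_linearCombination, map_sub, ← dictSum_eq_linearCombination, hbf]
    abel
  have hwcard : #w.support ≤ m :=
    calc #w.support ≤ #(c.support ∪ b.support) := card_le_card Finsupp.support_sub
      _ ≤ #c.support + #b.support := card_union_le _ _
      _ ≤ #c.support + k := by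
        gcongr
        exact (card_le_card (coe_subset.1 hb)).trans (card_image_le.trans (card_range k).le)
      _ ≤ m := hm
  have hwc : ∀ γ ∈ c.support \ (range k).image γseq, w γ = c γ := fun γ hγ => by
    have : b γ = 0 := Finsupp.notMem_support_iff.1 fun h => (mem_sdiff.1 hγ).2 (hb h)
    simp [w, this]
  have hmass : ∑ γ ∈ c.support \ (range k).image γseq, c γ ^ 2 ≤ l2normSq w := by
    rw [sum_congr rfl fun γ hγ => by rw [← hwc γ hγ]]
    refine sum_le_sum_of_subset_of_nonneg (fun γ hγ => ?_) fun _ _ _ => sq_nonneg _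
    rw [Finsupp.mem_support_iff, hwc γ hγ]
    exact Finsupp.mem_support_iff.1 (mem_sdiff.1 hγ).1
  have hlow := (hRIP w hwcard).1
  have hup : ‖dictSum φ w‖ ≤ ‖f - fk k‖ + ‖f - dictSum φ c‖ := hw ▸ norm_sub_le _ _
  nlinarith [l2normSq_nonneg w, norm_nonneg (dictSum φ w), norm_nonneg (f - dictSum φ c)]

lemma norm_sq_le_sum_sq_sdiff (hW : IsWOMP φ κ f γseq fk) (hRIP : RIP φ m δ) (hδ : δ ≤ 1 / 6)
    (hm : #c.support ≤ m) (hfar : 8 * ‖f - dictSum φ c‖ < ‖f - fk k‖) :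
    ‖f - fk k‖ ^ 2 ≤ 32 / 21 * ∑ γ ∈ c.support \ (range k).image γseq, c γ ^ 2 := by
  set u := ∑ γ ∈ c.support \ (range k).image γseq, c γ • φ γ
  have hproj := hW.norm_sub_le_of_mem_span (k := k)
    (dictSum_sub_sum_sdiff_mem_span φ c ((range k).image γseq))
  have hsplit : f - (dictSum φ c - u) = (f - dictSum φ c) + u := by abel
  have hle : ‖f - fk k‖ ≤ ‖f - dictSum φ c‖ + ‖u‖ :=
    hproj.trans (hsplit ▸ norm_add_le _ _)
  have hup : ‖u‖ ^ 2 ≤ (1 + δ) * ∑ γ ∈ c.support \ (range k).image γseq, c γ ^ 2 :=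
    hRIP.norm_sum_sq_le ((card_le_card sdiff_subset).trans hm) c
  nlinarith [norm_nonneg (f - dictSum φ c), norm_nonneg u,
    sum_nonneg fun γ (_ : γ ∈ c.support \ (range k).image γseq) => sq_nonneg (c γ)]

lemma inner_sum_sdiff_ge (hW : IsWOMP φ κ f γseq fk) (hRIP : RIP φ m δ) (hδ : δ ≤ 1 / 6)
    (hm : #c.support ≤ m) (hfar : 8 * ‖f - dictSum φ c‖ < ‖f - fk k‖) {T : Finset Γ}
    (hT : T ⊆ c.support \ (range k).image γseq) (htail : 9 * ∑ γ ∈ T, c γ ^ 2 ≤ ‖f - fk k‖ ^ 2) :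
    ‖f - fk k‖ ^ 2 / 2 ≤ ⟪f - fk k, ∑ γ ∈ (c.support \ (range k).image γseq) \ T, c γ • φ γ⟫ := by
  set r := f - fk k
  set uT := ∑ γ ∈ T, c γ • φ γ
  have hrf : ⟪r, f⟫ = ‖r‖ ^ 2 := by
    rw [← real_inner_self_eq_norm_sq, (sub_add_cancel f (fk k)).symm, inner_add_right,
      hW.inner_eq_zero k _ (hW.mem_span k), add_zero]
  have hrg : ⟪r, dictSum φ c⟫ =
      ⟪r, ∑ γ ∈ (c.support \ (range k).image γseq) \ T, c γ • φ γ⟫ + ⟪r, uT⟫ := by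
    rw [← inner_add_right, sum_sdiff hT, ← sub_eq_zero, ← inner_sub_right]
    exact hW.inner_eq_zero k _ (dictSum_sub_sum_sdiff_mem_span φ c _)
  have hfg : |⟪r, f - dictSum φ c⟫| ≤ ‖r‖ * ‖f - dictSum φ c‖ := abs_real_inner_le_norm _ _
  have hT' : |⟪r, uT⟫| ≤ ‖r‖ * ‖uT‖ := abs_real_inner_le_norm _ _
  have hup : ‖uT‖ ^ 2 ≤ (1 + δ) * ∑ γ ∈ T, c γ ^ 2 :=
    hRIP.norm_sum_sq_le ((card_le_card (hT.trans sdiff_subset)).trans hm) c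
  have huT : ‖uT‖ ≤ 3 / 8 * ‖r‖ := by
    refine (pow_le_pow_iff_left₀ (norm_nonneg _) (by positivity) two_ne_zero).1 ?_
    nlinarith [sum_nonneg fun γ (_ : γ ∈ T) => sq_nonneg (c γ)]
  rw [inner_sub_right, hrf, hrg] at hfg
  nlinarith [abs_le.1 hfg, abs_le.1 hT', norm_nonneg r, norm_nonneg (f - dictSum φ c)]

lemma norm_sq_succ_le_of_tail (hW : IsWOMP φ κ f γseq fk) (hnorm : ∀ γ, ‖φ γ‖ = 1)
    (hκ : 0 ≤ κ) (hRIP : RIP φ m δ) (hδ : δ ≤ 1 / 6) (hm : #c.support + k ≤ m)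
    (hfar : 8 * ‖f - dictSum φ c‖ < ‖f - fk k‖) {T : Finset Γ}
    (hT : T ⊆ c.support \ (range k).image γseq) (htail : 9 * ∑ γ ∈ T, c γ ^ 2 ≤ ‖f - fk k‖ ^ 2)
    {p : Γ} (hp : ∀ γ ∈ (c.support \ (range k).image γseq) \ T, c p ^ 2 ≤ c γ ^ 2) :
    ‖f - fk (k + 1)‖ ^ 2 ≤ ‖f - fk k‖ ^ 2 - 64 / 625 * κ ^ 2 * c p ^ 2 := by
  set r := f - fk k
  set L := (c.support \ (range k).image γseq) \ T
  set t := |⟪r, φ (γseq k)⟫|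
  have hcorr : ‖r‖ ^ 2 / 2 ≤ ⟪r, ∑ γ ∈ L, c γ • φ γ⟫ :=
    hW.inner_sum_sdiff_ge hRIP hδ ((Nat.le_add_right _ _).trans hm) hfar hT htail
  have hsel : κ * ⟪r, ∑ γ ∈ L, c γ • φ γ⟫ ≤ t * ∑ γ ∈ L, |c γ| := by
    simp only [inner_sum, real_inner_smul_right, mul_sum]
    refine sum_le_sum fun γ _ => ?_
    calc κ * (c γ * ⟪r, φ γ⟫) ≤ |κ * (c γ * ⟪r, φ γ⟫)| := le_abs_self _
      _ = |c γ| * (κ * |⟪r, φ γ⟫|) := by rw [abs_mul, abs_mul, abs_of_nonneg hκ]; ring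
      _ ≤ |c γ| * t := mul_le_mul_of_nonneg_left (hW.weak_greedy k γ) (abs_nonneg _)
      _ = t * |c γ| := mul_comm _ _
  have hmass : |c p| * ∑ γ ∈ L, |c γ| ≤ 243 / 160 * ‖r‖ ^ 2 := by
    calc |c p| * ∑ γ ∈ L, |c γ| ≤ ∑ γ ∈ L, c γ ^ 2 := by
          rw [mul_sum]
          refine sum_le_sum fun γ hγ => ?_
          rw [← sq_abs (c γ), sq]
          exact mul_le_mul_of_nonneg_right (sq_le_sq.1 (hp γ hγ)) (abs_nonneg _)
      _ ≤ ∑ γ ∈ c.support \ (range k).image γseq, c γ ^ 2 :=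
          sum_le_sum_of_subset_of_nonneg sdiff_subset fun _ _ _ => sq_nonneg _
      _ ≤ 243 / 160 * ‖r‖ ^ 2 := hW.sum_sq_sdiff_le hRIP hδ hm hfar
  have hr : 0 < ‖r‖ := lt_of_le_of_lt (by positivity) hfar
  have ht : 80 / 243 * κ * |c p| ≤ t := by
    have : κ * |c p| * (‖r‖ ^ 2 / 2) ≤ t * (243 / 160 * ‖r‖ ^ 2) :=
      calc κ * |c p| * (‖r‖ ^ 2 / 2) ≤ |c p| * (κ * ⟪r, ∑ γ ∈ L, c γ • φ γ⟫) := by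
            nlinarith [mul_nonneg hκ (abs_nonneg (c p))]
        _ ≤ |c p| * (t * ∑ γ ∈ L, |c γ|) := mul_le_mul_of_nonneg_left hsel (abs_nonneg _)
        _ = t * (|c p| * ∑ γ ∈ L, |c γ|) := by ring
        _ ≤ t * (243 / 160 * ‖r‖ ^ 2) := mul_le_mul_of_nonneg_left hmass (abs_nonneg _)
    nlinarith [pow_pos hr 2]
  have hstep := hW.norm_sq_succ_le hnorm k
  have ht2 := pow_le_pow_left₀ (by positivity) ht 2
  rw [sq_abs] at ht2
  nlinarith [sq_abs (c p), sq_nonneg κ, sq_nonneg (c p)]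

theorem norm_sub_le_of_rip (hW : IsWOMP φ κ f γseq fk) (hnorm : ∀ γ, ‖φ γ‖ = 1) (hκ : 0 ≤ κ)
    {n N : ℕ} (hRIP : RIP φ (N + n) δ) (hδ : δ ≤ 1 / 6) (hc : #c.support ≤ n)
    (hN : (9 + 64 / 625 * κ ^ 2) * n < 64 / 625 * κ ^ 2 * (N + 1)) :
    ‖f - fk N‖ ≤ 8 * ‖f - dictSum φ c‖ := by
  by_contra! hfar
  have hfar' : ∀ k ≤ N, 8 * ‖f - dictSum φ c‖ < ‖f - fk k‖ := fun k hk =>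
    hfar.trans_le (hW.norm_antitone hnorm hk)
  have hm : ∀ k ≤ N, #c.support + k ≤ N + n := fun k hk => by omega
  set U : ℕ → Finset Γ := fun k => c.support \ (range k).image γseq
  have hU : Antitone U := fun j k hjk =>
    sdiff_subset_sdiff subset_rfl (image_subset_image (range_subset_range.2 hjk))
  have hx : ∀ k ≤ N, ‖f - fk k‖ ^ 2 ≤ 9 * ∑ γ ∈ U k, c γ ^ 2 := fun k hk => by
    have := hW.norm_sq_le_sum_sq_sdiff hRIP hδ ((Nat.le_add_right _ _).trans (hm k hk)) (hfar' k hk)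
    linarith [sum_nonneg fun γ (_ : γ ∈ U k) => sq_nonneg (c γ)]
  have hdrop : ∀ k < N, ∀ T ⊆ U k, 9 * ∑ γ ∈ T, c γ ^ 2 ≤ ‖f - fk k‖ ^ 2 →
      ∀ p, (∀ γ ∈ U k \ T, c p ^ 2 ≤ c γ ^ 2) →
      ‖f - fk (k + 1)‖ ^ 2 ≤ ‖f - fk k‖ ^ 2 - 64 / 625 * κ ^ 2 * c p ^ 2 :=
    fun k hk T hT htail p hp => hW.norm_sq_succ_le_of_tail hnorm hκ hRIP hδ (hm k hk.le)
      (hfar' k hk.le) hT htail hp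
  -- order `Γ` by decreasing `|c γ|`, breaking ties injectively
  let _ : LinearOrder Γ := LinearOrder.lift' (fun γ => toLex (-|c γ|, embeddingToCardinal γ))
    fun γ γ' h => embeddingToCardinal.injective (congrArg Prod.snd (congrArg ofLex h))
  have hanti : Antitone fun γ => c γ ^ 2 := fun γ γ' h => by
    have := Prod.Lex.monotone_fst_ofLex (show toLex (-|c γ|, embeddingToCardinal γ) ≤
      toLex (-|c γ'|, embeddingToCardinal γ') from h)
    exact sq_le_sq.2 (by simpa using this)
  have hcount := TailMass.mul_succ_le_card_of_drop (a := fun γ => c γ ^ 2) (K := 9)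
    (x := fun k => ‖f - fk k‖ ^ 2) (by norm_num) (by positivity) hU
    (fun γ hγ => by simpa [U, sq_pos_iff] using hγ) (hanti.antitoneOn _)
    (fun k hk => pow_pos ((by positivity : (0 : ℝ) ≤ _).trans_lt (hfar' k hk)) 2) hx
    fun k hk p _ htail => hdrop k hk _ (filter_subset _ _) htail p fun γ hγ =>
      hanti (not_lt.1 fun h => (mem_sdiff.1 hγ).2 (mem_filter.2 ⟨(mem_sdiff.1 hγ).1, h⟩))
  have hU0 : (#(U 0) : ℝ) ≤ n := by exact_mod_cast (card_le_card sdiff_subset).trans hc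
  linarith [mul_le_mul_of_nonneg_left hU0 (by positivity : (0 : ℝ) ≤ 9 + 64 / 625 * κ ^ 2)]

end IsWOMP

end WOMP

theorem stmt9_Zhang_instance_optimality_general
    {Γ H : Type*} [DecidableEq Γ]
    [NormedAddCommGroup H] [InnerProductSpace ℝ H]
    (κ : ℝ) (hκ : 0 < κ) (hκ1 : κ ≤ 1)
    (A : ℕ) (hA : A = 26 * ⌈(6 : ℝ) / κ ^ 2⌉₊)
    (n : ℕ)
    (φ : Γ → H) (hnorm : ∀ γ, ‖φ γ‖ = 1)
    (δ : ℝ) (hδ : δ ≤ 1 / 6)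
    (hRIP : RIP φ ((A + 1) * n) δ)
    (f : H) (γseq : ℕ → Γ) (fk : ℕ → H)
    (S : ℕ → Finset Γ) (hS : ∀ k, S k = (Finset.range k).image γseq)
    (r : ℕ → H) (hr : ∀ k, r k = f - fk k)
    (hproj_mem : ∀ k, fk k ∈ Submodule.span ℝ (φ '' (S k : Set Γ)))
    (hproj_orth : ∀ k, ∀ v ∈ Submodule.span ℝ (φ '' (S k : Set Γ)), ⟪r k, v⟫ = 0)
    (hselect : ∀ k, ∀ γ' : Γ, κ * |⟪r k, φ γ'⟫| ≤ |⟪r k, φ (γseq k)⟫|) :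
    ‖f - fk (A * n)‖ ≤ 8 * bestErr φ n f := by
  obtain rfl : S = fun k => (range k).image γseq := funext hS
  obtain rfl : r = fun k => f - fk k := funext hr
  have hW : IsWOMP φ κ f γseq fk := ⟨hproj_mem, hproj_orth, hselect⟩
  have hA' : 156 ≤ κ ^ 2 * A := by
    have := Nat.le_ceil ((6 : ℝ) / κ ^ 2)
    rw [hA]
    push_cast
    rw [div_le_iff₀ (by positivity)] at this
    nlinarith
  refine le_mul_bestErr (by norm_num) fun c hc =>
    hW.norm_sub_le_of_rip hnorm hκ.le (by rwa [add_one_mul] at hRIP) hδ hc ?_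
  have hθA : 9 + 64 / 625 * κ ^ 2 ≤ 64 / 625 * κ ^ 2 * A := by
    nlinarith [pow_le_one₀ (n := 2) hκ.le hκ1]
  push_cast
  calc (9 + 64 / 625 * κ ^ 2) * n ≤ 64 / 625 * κ ^ 2 * A * n :=
        mul_le_mul_of_nonneg_right hθA n.cast_nonneg
    _ < 64 / 625 * κ ^ 2 * (A * n + 1) := by nlinarith [pow_pos hκ 2]

/-- Zhang's theorem (instance optimality of WOMP), with the explicit constants
`δ* = 1/6`, `A = 26⌈6κ⁻²⌉` and `C = 8`: if the dictionary satisfies RIP((A+1)n)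
with constant `δ ≤ 1/6`, then the WOMP approximation after `An` steps satisfies
`‖f − f_{An}‖ ≤ 8 σ_n(f)`. -/
theorem stmt9_Zhang_instance_optimality
    {Γ H : Type*} [Countable Γ] [DecidableEq Γ]
    [NormedAddCommGroup H] [InnerProductSpace ℝ H] [CompleteSpace H]
    (κ : ℝ) (hκ : 0 < κ) (hκ1 : κ ≤ 1)
    (A : ℕ) (hA : A = 26 * ⌈(6 : ℝ) / κ ^ 2⌉₊)
    (n : ℕ) (hn : 1 ≤ n)
    (φ : Γ → H) (hnorm : ∀ γ, ‖φ γ‖ = 1)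
    (δ : ℝ) (hδ : δ ≤ 1 / 6)
    (hRIP : RIP φ ((A + 1) * n) δ)
    (f : H) (γseq : ℕ → Γ) (fk : ℕ → H)
    (S : ℕ → Finset Γ) (hS : ∀ k, S k = (Finset.range k).image γseq)
    (r : ℕ → H) (hr : ∀ k, r k = f - fk k)
    (hproj_mem : ∀ k, fk k ∈ Submodule.span ℝ (φ '' (S k : Set Γ)))
    (hproj_orth : ∀ k, ∀ v ∈ Submodule.span ℝ (φ '' (S k : Set Γ)), ⟪r k, v⟫ = 0)
    (hselect : ∀ k, ∀ γ' : Γ, κ * |⟪r k, φ γ'⟫| ≤ |⟪r k, φ (γseq k)⟫|) :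
    ‖f - fk (A * n)‖ ≤ 8 * bestErr φ n f :=
  stmt9_Zhang_instance_optimality_general κ hκ hκ1 A hA n φ hnorm δ hδ hRIP f γseq fk S hS r hr
    hproj_mem hproj_orth hselect
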